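/- For the DAT kernel K_{l,m} = Σ_{n=0}^{N−1} X_{m,n}·exp(2πi·ln/N) with X satisfying the column normalization Σ_m |X_{m,n}|² = 1, the transform S_{j,m} = Σ_{l=0}^{N−1} s_l·K_{j−l,m} (indices mod N) satisfies the energy identity Σ_{m} Σ_{j=0}^{N−1} |S_{j,m}|² = N² · Σ_{l} |s_l|². -/

import Mathlib

/-!
With ŝ = 𝓕 s, the kernel column K(·, m) is the DFT of X_m read at −l, so by the convolution
theorem S(·, m) is, after the reflection j ↦ −j, the DFT of X_m · ŝ. Parseval on
ZMod N, which follows from Fourier inversion 𝓕 (𝓕 Φ) = N · Φ(−·), then gives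
Σ_j |S_{j,m}|² = N Σ_n |X_{m,n}|² |ŝ_n|². Summing over m, the column normalisation leaves
N Σ_n |ŝ_n|² = N² Σ_l |s_l|².
-/

open Finset ZMod ComplexConjugate

namespace ZMod

variable {N : ℕ} [NeZero N]

lemma conj_dft (Φ : ZMod N → ℂ) (k : ZMod N) :
    conj (𝓕 Φ k) = ∑ j, stdAddChar (k * j) * conj (Φ j) := by
  simp only [dft_apply, smul_eq_mul, map_sum, map_mul, ← AddChar.map_neg_eq_conj, neg_neg,
    mul_comm k]

lemma sum_dft_mul_conj_dft (Φ : ZMod N → ℂ) :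
    ∑ k, 𝓕 Φ k * conj (𝓕 Φ k) = N * ∑ j, Φ j * conj (Φ j) := by
  calc ∑ k, 𝓕 Φ k * conj (𝓕 Φ k)
      = ∑ j, conj (Φ j) * ∑ k, stdAddChar (-(k * -j)) • 𝓕 Φ k := by
        simp only [conj_dft, mul_sum, mul_neg, neg_neg, smul_eq_mul]
        rw [sum_comm]
        exact sum_congr rfl fun j _ => sum_congr rfl fun k _ => by ring
    _ = ∑ j, conj (Φ j) * 𝓕 (𝓕 Φ) (-j) := by simp only [dft_apply]
    _ = N * ∑ j, Φ j * conj (Φ j) := by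
        simp only [dft_dft, neg_neg, smul_eq_mul, mul_sum]
        exact sum_congr rfl fun j _ => by ring

lemma sum_norm_sq_dft (Φ : ZMod N → ℂ) :
    ∑ k, ‖𝓕 Φ k‖ ^ 2 = N * ∑ j, ‖Φ j‖ ^ 2 := by
  apply Complex.ofReal_injective
  push_cast
  simpa only [← Complex.mul_conj'] using sum_dft_mul_conj_dft Φ

lemma sum_mul_dft_sub (s x : ZMod N → ℂ) (j : ZMod N) :
    ∑ l, s l * 𝓕 x (l - j) = 𝓕 (fun n ↦ x n * 𝓕 s n) (-j) := by
  simp only [dft_apply, smul_eq_mul, mul_sum]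
  rw [sum_comm]
  refine sum_congr rfl fun n _ => sum_congr rfl fun l _ => ?_
  rw [show -(n * (l - j)) = -(n * -j) + -(l * n) by ring, AddChar.map_add_eq_mul]
  ring

lemma cexp_val_mul_val (l n : ZMod N) :
    Complex.exp (2 * Real.pi * Complex.I * (l.val * n.val) / N) = stdAddChar (l * n) := by
  rw [show l * n = ((l.val * n.val : ℕ) : ZMod N) by simp, stdAddChar_apply, toCircle_natCast]
  push_cast
  rfl

end ZMod

theorem dat_energy_identity {N M : ℕ} [NeZero N]
    (s : ZMod N → ℂ) (X : Fin M → ZMod N → ℂ)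
    (hX : ∀ n : ZMod N, ∑ m : Fin M, ‖X m n‖ ^ 2 = 1)
    (K : ZMod N → Fin M → ℂ)
    (hK : ∀ l m, K l m = ∑ n : ZMod N,
      X m n * Complex.exp (2 * Real.pi * Complex.I * (l.val * n.val) / N))
    (S : ZMod N → Fin M → ℂ)
    (hS : ∀ j m, S j m = ∑ l : ZMod N, s l * K (j - l) m) :
    ∑ m : Fin M, ∑ j : ZMod N, ‖S j m‖ ^ 2 = (N : ℝ) ^ 2 * ∑ l : ZMod N, ‖s l‖ ^ 2 := by
  have hK_dft : ∀ l m, K l m = 𝓕 (X m) (-l) := fun l m => by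
    rw [hK, dft_apply]
    refine sum_congr rfl fun n _ => ?_
    rw [cexp_val_mul_val, smul_eq_mul, mul_neg, neg_neg, mul_comm n, mul_comm]
  have hS_dft : ∀ j m, S j m = 𝓕 (fun n ↦ X m n * 𝓕 s n) (-j) := fun j m => by
    simp only [hS, hK_dft, neg_sub, sum_mul_dft_sub]
  have hcol : ∀ m, ∑ j, ‖S j m‖ ^ 2 = N * ∑ n, ‖X m n‖ ^ 2 * ‖𝓕 s n‖ ^ 2 := fun m => by
    calc ∑ j, ‖S j m‖ ^ 2 = ∑ j, ‖𝓕 (fun n ↦ X m n * 𝓕 s n) j‖ ^ 2 :=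
          Fintype.sum_equiv (Equiv.neg _) _ _ fun j => by rw [hS_dft, Equiv.neg_apply]
      _ = N * ∑ n, ‖X m n‖ ^ 2 * ‖𝓕 s n‖ ^ 2 := by
          simp only [sum_norm_sq_dft, norm_mul, mul_pow]
  calc ∑ m, ∑ j, ‖S j m‖ ^ 2 = N * ∑ n, (∑ m, ‖X m n‖ ^ 2) * ‖𝓕 s n‖ ^ 2 := by
        simp only [hcol, ← mul_sum, sum_mul]
        rw [sum_comm]
    _ = N ^ 2 * ∑ l, ‖s l‖ ^ 2 := by
        simp only [hX, one_mul, sum_norm_sq_dft]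
        ring
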